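/- arXiv:2502.21255 — 10 statements merged into one kernel-verified Lean document; each statement's English description precedes it below -/
import Mathlib

section
/- Let H be an exponentially distributed random variable with rate 1. Then for every real h_b ≥ 0 and every integer i ≥ 1, the probability P[ P_U·d_UB^{−α}·h_b / (N_0 + 2^{i−1}·P_S·d_SB^{−α}·H) < θ ] equals min(exp(−(γ_UB·h_b − θ)/(θ·2^{i−1}·γ_SB)), 1). -/
open Real MeasureTheory ProbabilityTheory
open Set

lemma div_add_mul_lt_iff {A N c θ h : ℝ} (hN : 0 < N) (hc : 0 < c) (hθ : 0 < θ) (hh : 0 < h) :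
    A / (N + c * h) < θ ↔ (A - θ * N) / (θ * c) < h := by
  rw [div_lt_iff₀ (by positivity), div_lt_iff₀ (by positivity)]
  constructor <;> intro _ <;> linarith

namespace ProbabilityTheory

variable {r : ℝ}

lemma expMeasure_Iic_zero (hr : 0 < r) : expMeasure r (Iic 0) = 0 := by
  have := isProbabilityMeasure_expMeasure hr
  rw [← ofReal_cdf, cdf_expMeasure_eq hr]
  simp

lemma ae_pos_expMeasure (hr : 0 < r) : ∀ᵐ x ∂expMeasure r, 0 < x := by
  rw [ae_iff]
  simpa [Iic] using expMeasure_Iic_zero hr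

lemma expMeasure_Ioi (hr : 0 < r) (t : ℝ) :
    expMeasure r (Ioi t) = ENNReal.ofReal (min (exp (-(r * t))) 1) := by
  have := isProbabilityMeasure_expMeasure hr
  rw [← compl_Iic, prob_compl_eq_one_sub measurableSet_Iic, ← ofReal_cdf, cdf_expMeasure_eq hr]
  by_cases ht : 0 ≤ t
  · have hexp_le : exp (-(r * t)) ≤ 1 := exp_le_one_iff.2 (by nlinarith)
    rw [if_pos ht, min_eq_left hexp_le, ENNReal.ofReal_sub _ (exp_pos _).le, ENNReal.ofReal_one,
      ENNReal.sub_sub_cancel ENNReal.one_ne_top (ENNReal.ofReal_le_one.2 hexp_le)]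
  · have hexp_ge : 1 ≤ exp (-(r * t)) := one_le_exp (by nlinarith)
    simp [if_neg ht, min_eq_right hexp_ge]

/-- Since `h > 0` almost surely, the event is the tail event `h > (A - θ N) / (θ c)`. -/
lemma expMeasure_div_add_mul_lt (hr : 0 < r) {A N c θ : ℝ} (hN : 0 < N) (hc : 0 < c)
    (hθ : 0 < θ) :
    expMeasure r {h | A / (N + c * h) < θ}
      = ENNReal.ofReal (min (exp (-(r * ((A - θ * N) / (θ * c))))) 1) := by
  rw [← expMeasure_Ioi hr]
  refine measure_congr (Filter.eventuallyEq_set.2 ?_)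
  filter_upwards [ae_pos_expMeasure hr] with h hh
  exact div_add_mul_lt_iff hN hc hθ hh

end ProbabilityTheory

theorem stmt1_general (P_S P_U N₀ d_SB d_UB α θ : ℝ)
    (hPS : 0 < P_S) (hN0 : 0 < N₀) (hdSB : 0 < d_SB)
    (hθ : 0 < θ)
    (γSB γUB : ℝ)
    (hγSB : γSB = P_S * d_SB ^ (-α) / N₀)
    (hγUB : γUB = P_U * d_UB ^ (-α) / N₀) :
    ∀ h_b : ℝ, 0 ≤ h_b → ∀ i : ℕ, 1 ≤ i →
      (expMeasure 1)
        {h : ℝ | P_U * d_UB ^ (-α) * h_b / (N₀ + 2 ^ (i - 1) * P_S * d_SB ^ (-α) * h) < θ}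
        = ENNReal.ofReal
            (min (Real.exp (-(γUB * h_b - θ) / (θ * 2 ^ (i - 1) * γSB))) 1) := by
  intro h_b _ i _
  have hexponent : -(γUB * h_b - θ) / (θ * 2 ^ (i - 1) * γSB)
      = -(1 * ((P_U * d_UB ^ (-α) * h_b - θ * N₀) / (θ * (2 ^ (i - 1) * P_S * d_SB ^ (-α))))) := by
    have : 0 < d_SB ^ (-α) := by positivity
    rw [hγSB, hγUB]
    field_simp
  rw [hexponent]
  exact expMeasure_div_add_mul_lt one_pos hN0 (by positivity) hθ

/-- For `H` exponentially distributed with rate 1, for every `h_b ≥ 0` and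
integer `i ≥ 1`,
`P[ P_U·d_UB^{−α}·h_b / (N_0 + 2^{i−1}·P_S·d_SB^{−α}·H) < θ ]
  = min(exp(−(γ_UB·h_b − θ)/(θ·2^{i−1}·γ_SB)), 1)`,
where `γ_SB = P_S·d_SB^{−α}/N_0` and `γ_UB = P_U·d_UB^{−α}/N_0`. -/
theorem stmt1 (P_S P_U N₀ d_SB d_UB α θ : ℝ)
    (hPS : 0 < P_S) (hPU : 0 < P_U) (hN0 : 0 < N₀) (hdSB : 0 < d_SB) (hdUB : 0 < d_UB)
    (hα : 0 < α) (hθ : 0 < θ)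
    (γSB γUB : ℝ)
    (hγSB : γSB = P_S * d_SB ^ (-α) / N₀)
    (hγUB : γUB = P_U * d_UB ^ (-α) / N₀) :
    ∀ h_b : ℝ, 0 ≤ h_b → ∀ i : ℕ, 1 ≤ i →
      (expMeasure 1)
        {h : ℝ | P_U * d_UB ^ (-α) * h_b / (N₀ + 2 ^ (i - 1) * P_S * d_SB ^ (-α) * h) < θ}
        = ENNReal.ofReal
            (min (Real.exp (-(γUB * h_b - θ) / (θ * 2 ^ (i - 1) * γSB))) 1) :=
  stmt1_general P_S P_U N₀ d_SB d_UB α θ hPS hN0 hdSB hθ γSB γUB hγSB hγUB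
end

section
/- Define h* = −(2^{N−1}·γ_SD/(θ·γ_UD))·ln λ − 1/γ_UD. Let (h_d, h_b) ∈ [0,∞)² with h_b < θ/γ_UB. If h_d < h*, then G_N(h_d,h_b) > G_i(h_d,h_b) for every i ∈ {0,1,…,N−1}; if h_d > h*, then G_0(h_d,h_b) > G_i(h_d,h_b) for every i ∈ {1,…,N}. That is, in the region h_b < θ/γ_UB the maximum-reward power level is N when h_d < h* and 0 when h_d > h*. -/
/-!
For `h_b < θ/γ_UB` the exponent in `q_i` is nonnegative, so every `q_i` is capped at `1` and
`G_i = p_i − λ` for `i ≥ 1`. Since `p_i` is strictly increasing in `i`, level `N` beats every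
level `1 ≤ i < N`, and level `0` beats every level `i ≥ 1` as soon as it beats level `N`.
Finally `p_N` is strictly decreasing in `h_d` with `p_N(h*) = λ`, so `G_N > 0 = G_0` exactly
when `h_d < h*`.
-/

open Real

/-- Decoding probability `p_i(h_d)` (for `i ≥ 1`). -/
noncomputable def pLvl (θ γSD γUD : ℝ) (i : ℕ) (hd : ℝ) : ℝ :=
  Real.exp (-(θ * (γUD * hd + 1)) / (2 ^ (i - 1) * γSD))

/-- Blockage probability `q_i(h_b)` (for `i ≥ 1`). -/
noncomputable def qLvl (θ γSB γUB : ℝ) (i : ℕ) (hb : ℝ) : ℝ :=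
  min (Real.exp (-(γUB * hb - θ) / (θ * 2 ^ (i - 1) * γSB))) 1

/-- Gain `G_i(h_d, h_b) = p_i(h_d) − λ·q_i(h_b)`, with `G_0 = 0`. -/
noncomputable def gain (θ lam γSD γSB γUD γUB : ℝ) (i : ℕ) (hd hb : ℝ) : ℝ :=
  if i = 0 then 0 else pLvl θ γSD γUD i hd - lam * qLvl θ γSB γUB i hb

lemma qLvl_eq_one {θ γSB γUB hb : ℝ} (hθ : 0 ≤ θ) (hγSB : 0 ≤ γSB) (hb_le : γUB * hb ≤ θ)
    (i : ℕ) : qLvl θ γSB γUB i hb = 1 := by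
  refine min_eq_right (one_le_exp (div_nonneg (by linarith) ?_))
  positivity

lemma gain_zero (θ lam γSD γSB γUD γUB hd hb : ℝ) :
    gain θ lam γSD γSB γUD γUB 0 hd hb = 0 :=
  if_pos rfl

lemma gain_eq_pLvl_sub {θ lam γSD γSB γUD γUB hd hb : ℝ} {i : ℕ} (hi : i ≠ 0)
    (hq : qLvl θ γSB γUB i hb = 1) :
    gain θ lam γSD γSB γUD γUB i hd hb = pLvl θ γSD γUD i hd - lam := by
  rw [gain, if_neg hi, hq, mul_one]

lemma pLvl_strictMonoOn {θ γSD γUD hd : ℝ} (hc : 0 < θ * (γUD * hd + 1)) (hγSD : 0 < γSD) :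
    StrictMonoOn (pLvl θ γSD γUD · hd) (Set.Ici 1) := by
  intro i hi j hj hij
  simp only [Set.mem_Ici] at hi hj
  have hpow : (2 : ℝ) ^ (i - 1) < 2 ^ (j - 1) := pow_lt_pow_right₀ one_lt_two (by omega)
  refine exp_lt_exp.mpr ?_
  rw [neg_div, neg_div, neg_lt_neg_iff]
  exact div_lt_div_of_pos_left hc (by positivity) (mul_lt_mul_of_pos_right hpow hγSD)

lemma pLvl_strictAnti {θ γSD γUD : ℝ} (hθ : 0 < θ) (hγSD : 0 < γSD) (hγUD : 0 < γUD) (i : ℕ) :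
    StrictAnti (pLvl θ γSD γUD i) := by
  intro a b hab
  refine exp_lt_exp.mpr (div_lt_div_of_pos_right ?_ (by positivity))
  have : γUD * a < γUD * b := mul_lt_mul_of_pos_left hab hγUD
  nlinarith

lemma pLvl_threshold {θ lam γSD γUD : ℝ} (hθ : 0 < θ) (hlam : 0 < lam) (hγSD : 0 < γSD)
    (hγUD : 0 < γUD) (N : ℕ) :
    pLvl θ γSD γUD N (-(2 ^ (N - 1) * γSD / (θ * γUD)) * Real.log lam - 1 / γUD) = lam := by
  rw [pLvl]
  convert exp_log hlam using 2
  field_simp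
  ring

/-- In the region `h_b < θ/γ_UB`, with
`h* = −(2^{N−1}·γ_SD/(θ·γ_UD))·ln λ − 1/γ_UD`, the maximum-reward power level is `N`
when `h_d < h*` and `0` when `h_d > h*`. -/
theorem stmt2 (N : ℕ) (hN : 1 ≤ N) (θ lam γSD γSB γUD γUB : ℝ)
    (hθ : 0 < θ) (hlam : 0 < lam) (hγSD : 0 < γSD) (hγSB : 0 < γSB)
    (hγUD : 0 < γUD) (hγUB : 0 < γUB)
    (hstar : ℝ)
    (hhstar : hstar = -(2 ^ (N - 1) * γSD / (θ * γUD)) * Real.log lam - 1 / γUD) :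
    ∀ h_d h_b : ℝ, 0 ≤ h_d → 0 ≤ h_b → h_b < θ / γUB →
      (h_d < hstar → ∀ i : ℕ, i ≤ N - 1 →
        gain θ lam γSD γSB γUD γUB N h_d h_b > gain θ lam γSD γSB γUD γUB i h_d h_b) ∧
      (h_d > hstar → ∀ i : ℕ, 1 ≤ i → i ≤ N →
        gain θ lam γSD γSB γUD γUB 0 h_d h_b > gain θ lam γSD γSB γUD γUB i h_d h_b) := by
  intro h_d h_b hd _ hb
  have hq := qLvl_eq_one hθ.le hγSB.le ((lt_div_iff₀' hγUB).mp hb).le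
  have hG (i : ℕ) (hi : i ≠ 0) :
      gain θ lam γSD γSB γUD γUB i h_d h_b = pLvl θ γSD γUD i h_d - lam :=
    gain_eq_pLvl_sub hi (hq i)
  have hmono : StrictMonoOn (pLvl θ γSD γUD · h_d) (Set.Ici 1) :=
    pLvl_strictMonoOn (by positivity) hγSD
  have hanti := pLvl_strictAnti hθ hγSD hγUD N
  have hstar_eq : pLvl θ γSD γUD N hstar = lam := hhstar ▸ pLvl_threshold hθ hlam hγSD hγUD N
  refine ⟨fun hlt i hi => ?_, fun hgt i hi1 hiN => ?_⟩
  · have hlam_lt := hstar_eq ▸ hanti hlt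
    rw [hG N (by omega)]
    rcases Nat.eq_zero_or_pos i with rfl | hi0
    · rw [gain_zero]
      linarith
    · rw [hG i (by omega)]
      linarith [hmono (Set.mem_Ici.mpr hi0) (Set.mem_Ici.mpr hN) (by omega : i < N)]
  · have hlt_lam := hstar_eq ▸ hanti hgt
    rw [gain_zero, hG i (by omega)]
    linarith [hmono.monotoneOn (Set.mem_Ici.mpr hi1) (Set.mem_Ici.mpr hN) hiN]
end

section
/- (Lemma 1.) For i ∈ {1,…,N} set ν_i = θ·(γ_SB/γ_UB)·(1/γ_SB + θ/γ_SD + 2^{i−1}·ln λ), set M = θ²·γ_SB·γ_UD/(γ_SD·γ_UB), and set Q = min_{1 ≤ i ≤ N} ν_i. Then for every (h_d, h_b) ∈ [0,∞)² with h_b ≥ θ/γ_UB, one has G_i(h_d,h_b) < 0 for every i ∈ {1,…,N} if and only if h_b < M·h_d + Q. Moreover Q = ν_1 when λ ≥ 1 and Q = ν_N when λ < 1. -/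
open Real

lemma key (θ lam γSD γSB γUD γUB : ℝ)
    (hθ : 0 < θ) (hlam : 0 < lam) (hγSD : 0 < γSD) (hγSB : 0 < γSB)
    (hγUB : 0 < γUB) (i : ℕ) (hi : 1 ≤ i) (h_d h_b : ℝ)
    (hb : θ / γUB ≤ h_b) :
    gain θ lam γSD γSB γUD γUB i h_d h_b < 0 ↔
      h_b < θ ^ 2 * γSB * γUD / (γSD * γUB) * h_d
        + θ * (γSB / γUB) * (1 / γSB + θ / γSD + 2 ^ (i - 1) * Real.log lam) := by
  have hc : (0:ℝ) < (2:ℝ) ^ (i - 1) := by positivity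
  have hY : 0 ≤ γUB * h_b - θ := by
    have := (div_le_iff₀ hγUB).mp hb; linarith
  unfold gain pLvl qLvl
  rw [if_neg (by omega)]
  rw [min_eq_left (Real.exp_le_one_iff.mpr
      (div_nonpos_of_nonpos_of_nonneg (by linarith) (by positivity)))]
  rw [sub_neg]
  rw [show lam * Real.exp (-(γUB * h_b - θ) / (θ * 2 ^ (i - 1) * γSB))
      = Real.exp (Real.log lam + -(γUB * h_b - θ) / (θ * 2 ^ (i - 1) * γSB)) by
    rw [Real.exp_add, Real.exp_log hlam]]
  rw [Real.exp_lt_exp]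
  rw [← sub_pos]
  rw [show Real.log lam + -(γUB * h_b - θ) / (θ * 2 ^ (i - 1) * γSB)
      - -(θ * (γUD * h_d + 1)) / (2 ^ (i - 1) * γSD)
      = (θ ^ 2 * γSB * γUD / (γSD * γUB) * h_d
        + θ * (γSB / γUB) * (1 / γSB + θ / γSD + 2 ^ (i - 1) * Real.log lam) - h_b)
        * (γUB / (θ * 2 ^ (i - 1) * γSB)) by
    field_simp
    ring]
  rw [mul_pos_iff_of_pos_right (by positivity), sub_pos]

/-- Lemma 1: With `ν_i = θ·(γ_SB/γ_UB)·(1/γ_SB + θ/γ_SD + 2^{i−1}·ln λ)`,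
`M = θ²·γ_SB·γ_UD/(γ_SD·γ_UB)` and `Q = min_{1 ≤ i ≤ N} ν_i`, for every state with
`h_b ≥ θ/γ_UB` one has `G_i < 0` for all `i ∈ {1,…,N}` iff `h_b < M·h_d + Q`; moreover
`Q = ν_1` when `λ ≥ 1` and `Q = ν_N` when `λ < 1`. -/
theorem stmt3 (N : ℕ) (hN : 1 ≤ N) (θ lam γSD γSB γUD γUB : ℝ)
    (hθ : 0 < θ) (hlam : 0 < lam) (hγSD : 0 < γSD) (hγSB : 0 < γSB)
    (hγUD : 0 < γUD) (hγUB : 0 < γUB)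
    (ν : ℕ → ℝ)
    (hν : ∀ i : ℕ, ν i = θ * (γSB / γUB) * (1 / γSB + θ / γSD + 2 ^ (i - 1) * Real.log lam))
    (M Q : ℝ)
    (hM : M = θ ^ 2 * γSB * γUD / (γSD * γUB))
    (hQ : Q = (Finset.Icc 1 N).inf' (Finset.nonempty_Icc.mpr hN) ν) :
    (∀ h_d h_b : ℝ, 0 ≤ h_d → 0 ≤ h_b → θ / γUB ≤ h_b →
      ((∀ i ∈ Finset.Icc 1 N, gain θ lam γSD γSB γUD γUB i h_d h_b < 0) ↔
        h_b < M * h_d + Q)) ∧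
    (1 ≤ lam → Q = ν 1) ∧ (lam < 1 → Q = ν N) := by
  have hC : 0 < θ * (γSB / γUB) := by positivity
  refine ⟨?_, ?_, ?_⟩
  · intro h_d h_b _ _ hb
    constructor
    · intro h
      obtain ⟨j, hj, hje⟩ := Finset.exists_mem_eq_inf' (Finset.nonempty_Icc.mpr hN) ν
      rw [hQ, hje]
      have := (key θ lam γSD γSB γUD γUB hθ hlam hγSD hγSB hγUB j
        (Finset.mem_Icc.mp hj).1 h_d h_b hb).mp (h j hj)
      rw [hν j, hM]
      exact this
    · intro h i hi
      rw [key θ lam γSD γSB γUD γUB hθ hlam hγSD hγSB hγUB i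
        (Finset.mem_Icc.mp hi).1 h_d h_b hb, ← hν i, ← hM]
      have : Q ≤ ν i := hQ ▸ Finset.inf'_le ν hi
      linarith
  · intro hl
    have hlog : 0 ≤ Real.log lam := Real.log_nonneg hl
    refine le_antisymm (hQ ▸ Finset.inf'_le ν (by simp [hN])) ?_
    rw [hQ]
    apply Finset.le_inf'
    intro i hi
    rw [hν 1, hν i]
    have h2 : (1:ℝ) ≤ 2 ^ (i - 1) := one_le_pow₀ (by norm_num)
    have : (2:ℝ) ^ (1 - 1 : ℕ) = 1 := by norm_num
    rw [this]
    nlinarith [mul_nonneg (sub_nonneg.mpr h2) hlog]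
  · intro hl
    have hlog : Real.log lam ≤ 0 := Real.log_nonpos hlam.le hl.le
    refine le_antisymm (hQ ▸ Finset.inf'_le ν (by simp [hN])) ?_
    rw [hQ]
    apply Finset.le_inf'
    intro i hi
    rw [hν N, hν i]
    have hiN : i - 1 ≤ N - 1 := by
      have := (Finset.mem_Icc.mp hi).2; omega
    have h2 : (2:ℝ) ^ (i - 1) ≤ 2 ^ (N - 1) := by
      apply pow_le_pow_right₀ (by norm_num) hiN
    nlinarith [mul_nonpos_of_nonneg_of_nonpos (sub_nonneg.mpr h2) hlog]
end

section
/- (Boundary characterization between adjacent regions.) Assume λ ≥ 1 and let i ∈ {1,…,N−1}. Then for every (h_d, h_b) ∈ [0,∞)² with h_b ≥ θ/γ_UB, one has G_i(h_d,h_b) = G_{i+1}(h_d,h_b) if and only if h_b = g_i^+(h_d) or h_b = g_i^−(h_d). -/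
open Real

/-- Upper boundary curve `g_i^+(h_d)`. -/
noncomputable def gPlus (θ lam γSD γSB γUD γUB : ℝ) (i : ℕ) (hd : ℝ) : ℝ :=
  θ / γUB - θ * (γSB / γUB) * 2 ^ i *
    Real.log (1 / 2 - (1 / 2) * Real.sqrt
      (1 - (4 / lam) * pLvl θ γSD γUD (i + 1) hd * (1 - pLvl θ γSD γUD (i + 1) hd)))

/-- Lower boundary curve `g_i^−(h_d)`. -/
noncomputable def gMinus (θ lam γSD γSB γUD γUB : ℝ) (i : ℕ) (hd : ℝ) : ℝ :=
  θ / γUB - θ * (γSB / γUB) * 2 ^ i *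
    Real.log (1 / 2 + (1 / 2) * Real.sqrt
      (1 - (4 / lam) * pLvl θ γSD γUD (i + 1) hd * (1 - pLvl θ γSD γUD (i + 1) hd)))

set_option maxHeartbeats 1000000 in
/-- for `λ ≥ 1` and `i ∈ {1,…,N−1}`, in the region `h_b ≥ θ/γ_UB` one has
`G_i(h_d,h_b) = G_{i+1}(h_d,h_b)` iff `h_b = g_i^+(h_d)` or `h_b = g_i^−(h_d)`. -/
theorem stmt6 (N : ℕ) (hN : 1 ≤ N) (θ lam γSD γSB γUD γUB : ℝ)
    (hθ : 0 < θ) (hlam : 1 ≤ lam) (hγSD : 0 < γSD) (hγSB : 0 < γSB)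
    (hγUD : 0 < γUD) (hγUB : 0 < γUB)
    (i : ℕ) (hi1 : 1 ≤ i) (hiN : i ≤ N - 1) :
    ∀ h_d h_b : ℝ, 0 ≤ h_d → 0 ≤ h_b → θ / γUB ≤ h_b →
      (gain θ lam γSD γSB γUD γUB i h_d h_b =
          gain θ lam γSD γSB γUD γUB (i + 1) h_d h_b ↔
        h_b = gPlus θ lam γSD γSB γUD γUB i h_d ∨
        h_b = gMinus θ lam γSD γSB γUD γUB i h_d)     := by
  intro h_d h_b hd0 hb0 hbθ
  obtain ⟨j, rfl⟩ : ∃ j, i = j + 1 := ⟨i - 1, (Nat.succ_pred_eq_of_pos hi1).symm⟩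
  set A : ℝ := θ * (γUD * h_d + 1) with hA
  have hA0 : 0 < A := by positivity
  set B : ℝ := γUB * h_b - θ with hB
  have hB0 : 0 ≤ B := by
    have := (div_le_iff₀ hγUB).mp hbθ
    simp [hB]; nlinarith
  set c : ℝ := 2 ^ (j + 1) with hc
  have hc0 : (0:ℝ) < c := by positivity
  have hcj : c = 2 ^ j * 2 := by rw [hc, pow_succ]
  set p : ℝ := Real.exp (-A / (c * γSD)) with hp
  set x : ℝ := Real.exp (-B / (θ * c * γSB)) with hx
  have hp0 : 0 < p := Real.exp_pos _
  have hx0 : 0 < x := Real.exp_pos _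
  have hp1 : p < 1 := by
    rw [hp, Real.exp_lt_one_iff]
    apply div_neg_of_neg_of_pos (by linarith) (by positivity)
  have hx1 : x ≤ 1 := by
    rw [hx, Real.exp_le_one_iff]
    apply div_nonpos_of_nonpos_of_nonneg (by linarith) (by positivity)
  have hlam0 : (0:ℝ) < lam := by linarith
  -- rewrite pLvl and qLvl
  have pe : pLvl θ γSD γUD (j + 1 + 1) h_d = p := by
    simp [pLvl, hp, hA, hc]
  have pe2 : pLvl θ γSD γUD (j + 1) h_d = p ^ 2 := by
    rw [hp, sq, ← Real.exp_add]
    simp only [pLvl, Nat.add_sub_cancel]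
    congr 1
    rw [hcj]
    field_simp
    ring
  have qe : qLvl θ γSB γUB (j + 1 + 1) h_b = x := by
    simp only [qLvl, Nat.add_sub_cancel, hx, hB, hc]
    exact min_eq_left (by rw [← hc, ← hB, ← hx]; exact hx1)
  have qe2 : qLvl θ γSB γUB (j + 1) h_b = x ^ 2 := by
    simp only [qLvl, Nat.add_sub_cancel]
    have h1 : -(γUB * h_b - θ) / (θ * 2 ^ j * γSB) = -B / (θ * 2 ^ j * γSB) := by rw [hB]
    have h2 : Real.exp (-B / (θ * 2 ^ j * γSB)) = x ^ 2 := by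
      rw [hx, sq, ← Real.exp_add]
      congr 1
      rw [hcj]
      field_simp
      ring
    rw [h1, h2]
    exact min_eq_left (by nlinarith)
  clear_value A p x
  -- the discriminant
  set D : ℝ := 1 - 4 / lam * p * (1 - p) with hD
  clear_value D
  have hD0 : 0 ≤ D := by
    have hpp : (0:ℝ) ≤ p * (1 - p) := mul_nonneg hp0.le (by linarith)
    have h4 : 4 / lam * p * (1 - p) ≤ 4 * p * (1 - p) := by
      have h5 : 4 / lam ≤ 4 := by
        rw [div_le_iff₀ hlam0]; nlinarith
      calc 4 / lam * p * (1 - p) = 4 / lam * (p * (1 - p)) := by ring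
        _ ≤ 4 * (p * (1 - p)) := mul_le_mul_of_nonneg_right h5 hpp
        _ = 4 * p * (1 - p) := by ring
    nlinarith [sq_nonneg (2 * p - 1)]
  have hD1 : D < 1 := by
    have : 0 < 4 / lam * p * (1 - p) :=
      mul_pos (mul_pos (by positivity) hp0) (by linarith)
    rw [hD]; linarith
  set s : ℝ := Real.sqrt D with hs
  have hs0 : 0 ≤ s := Real.sqrt_nonneg _
  have hs2 : s ^ 2 = D := Real.sq_sqrt hD0
  clear_value s
  have hs1 : s < 1 := by
    have h2 : s ^ 2 < 1 ^ 2 := by rw [hs2]; simpa using hD1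
    exact lt_of_pow_lt_pow_left₀ 2 zero_le_one h2
  have hDl : lam * s ^ 2 = lam - 4 * p * (1 - p) := by
    rw [hs2, hD]
    field_simp
  -- curves
  have gPe : gPlus θ lam γSD γSB γUD γUB (j + 1) h_d
      = θ / γUB - θ * (γSB / γUB) * c * Real.log (1 / 2 - 1 / 2 * s) := by
    rw [gPlus, pe, ← hc, ← hD, ← hs]
  have gMe : gMinus θ lam γSD γSB γUD γUB (j + 1) h_d
      = θ / γUB - θ * (γSB / γUB) * c * Real.log (1 / 2 + 1 / 2 * s) := by
    rw [gMinus, pe, ← hc, ← hD, ← hs]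
  -- roots positivity
  have hrP : (0:ℝ) < 1 / 2 - 1 / 2 * s := by linarith
  have hrM : (0:ℝ) < 1 / 2 + 1 / 2 * s := by linarith
  -- x = r ↔ h_b = curve
  have key : ∀ r : ℝ, 0 < r →
      (x = r ↔ h_b = θ / γUB - θ * (γSB / γUB) * c * Real.log r) := by
    intro r hr
    rw [hx, show r = Real.exp (Real.log r) from (Real.exp_log hr).symm,
      Real.exp_eq_exp, Real.log_exp]
    constructor
    · intro h
      have hne : θ * c * γSB ≠ 0 := by positivity
      field_simp at h ⊢
      rw [hB] at h
      nlinarith [h]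
    · intro h
      rw [hB, h]
      field_simp
      ring
  -- gain equation
  have ggain : (gain θ lam γSD γSB γUD γUB (j + 1) h_d h_b =
      gain θ lam γSD γSB γUD γUB (j + 1 + 1) h_d h_b)
      ↔ (x = 1 / 2 - 1 / 2 * s ∨ x = 1 / 2 + 1 / 2 * s) := by
    simp only [gain, if_neg (Nat.succ_ne_zero j), if_neg (Nat.succ_ne_zero (j+1)),
      pe, pe2, qe, qe2]
    constructor
    · intro h
      have hfac : lam * ((x - (1 / 2 - 1 / 2 * s)) * (x - (1 / 2 + 1 / 2 * s))) = 0 := by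
        linear_combination -h - (1/4 : ℝ) * hDl
      rcases mul_eq_zero.mp hfac with h0 | h0
      · exact absurd h0 (by positivity)
      · rcases mul_eq_zero.mp h0 with h1 | h1
        · exact Or.inl (by linarith)
        · exact Or.inr (by linarith)
    · rintro (h | h) <;> rw [h] <;> linear_combination (-1/4 : ℝ) * hDl
  rw [ggain, gPe, gMe, key _ hrP, key _ hrM]
end

section
/- (Linear asymptote of the boundary curves.) Assume λ ≥ 1 and let i ∈ {1,…,N−1}. Define the linear function ḡ_i(h_d) = θ²·(γ_SB·γ_UD/(γ_SD·γ_UB))·h_d + θ·(γ_SB/γ_UB)·(1/γ_SB + θ/γ_SD + 2^i·ln λ). Then g_i^+(h_d) − ḡ_i(h_d) → 0 as h_d → ∞, i.e. g_i^+ approaches ḡ_i asymptotically. -/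
open Real Filter

lemma key_log (lam p : ℝ) (hlam : 1 ≤ lam) (hp0 : 0 < p) (hp1 : p < 1) :
    Real.log (1 / 2 - (1 / 2) * Real.sqrt (1 - (4 / lam) * p * (1 - p))) =
      Real.log 2 - Real.log lam + Real.log p + Real.log (1 - p)
        - Real.log (1 + Real.sqrt (1 - (4 / lam) * p * (1 - p))) := by
  have hlam0 : 0 < lam := lt_of_lt_of_le one_pos hlam
  have h1p : 0 < 1 - p := by linarith
  set A : ℝ := (4 / lam) * p * (1 - p) with hA
  have hA0 : 0 < A := mul_pos (mul_pos (by positivity) hp0) h1p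
  have hA1 : A ≤ 1 := by
    have h4 : 4 * p * (1 - p) ≤ 1 := by nlinarith [sq_nonneg (2 * p - 1)]
    have hle : (4 / lam) * p * (1 - p) ≤ 4 * p * (1 - p) := by
      have : 4 / lam ≤ 4 := by
        rw [div_le_iff₀ hlam0]; nlinarith
      nlinarith [mul_pos hp0 h1p]
    linarith
  set s : ℝ := Real.sqrt (1 - A) with hs
  have hs0 : 0 ≤ s := Real.sqrt_nonneg _
  have hssq : s ^ 2 = 1 - A := Real.sq_sqrt (by linarith)
  have hs1 : s < 1 := by nlinarith
  have h1s : (0:ℝ) < 1 + s := by linarith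
  have h : (1 - s) * (1 + s) = A := by linear_combination -hssq
  have hlamA : lam * A = 4 * p * (1 - p) := by rw [hA]; field_simp
  have hrw : 1 / 2 - (1 / 2) * s = 2 * p * (1 - p) / (lam * (1 + s)) := by
    rw [eq_div_iff (by positivity)]
    linear_combination (lam / 2) * h + (1 / 2) * hlamA
  rw [hrw]
  rw [Real.log_div (by positivity) (by positivity),
    Real.log_mul (ne_of_gt (mul_pos two_pos hp0)) (ne_of_gt h1p),
    Real.log_mul (ne_of_gt two_pos) (ne_of_gt hp0),
    Real.log_mul (ne_of_gt hlam0) (ne_of_gt h1s)]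
  ring

/-- linear asymptote: for `λ ≥ 1` and `i ∈ {1,…,N−1}`, with
`ḡ_i(h_d) = θ²·(γ_SB·γ_UD/(γ_SD·γ_UB))·h_d + θ·(γ_SB/γ_UB)·(1/γ_SB + θ/γ_SD + 2^i·ln λ)`,
one has `g_i^+(h_d) − ḡ_i(h_d) → 0` as `h_d → ∞`. -/
theorem stmt11 (N : ℕ) (hN : 1 ≤ N) (θ lam γSD γSB γUD γUB : ℝ)
    (hθ : 0 < θ) (hlam : 1 ≤ lam) (hγSD : 0 < γSD) (hγSB : 0 < γSB)
    (hγUD : 0 < γUD) (hγUB : 0 < γUB)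
    (i : ℕ) (hi1 : 1 ≤ i) (hiN : i ≤ N - 1)
    (gBar : ℝ → ℝ)
    (hgBar : ∀ h_d : ℝ, gBar h_d =
      θ ^ 2 * (γSB * γUD / (γSD * γUB)) * h_d +
        θ * (γSB / γUB) * (1 / γSB + θ / γSD + 2 ^ i * Real.log lam)) :
    Tendsto (fun h_d : ℝ => gPlus θ lam γSD γSB γUD γUB i h_d - gBar h_d)
      atTop (nhds 0) := by
  have hlam0 : 0 < lam := lt_of_lt_of_le one_pos hlam
  set c : ℝ := θ * (γSB / γUB) * 2 ^ i with hc
  set P : ℝ → ℝ := fun hd => pLvl θ γSD γUD (i + 1) hd with hP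
  have hPdef : ∀ hd, P hd = Real.exp (-(θ * (γUD * hd + 1)) / (2 ^ i * γSD)) := by
    intro hd; simp [hP, pLvl]
  have hP0 : ∀ hd, 0 < P hd := fun hd => by rw [hPdef]; exact Real.exp_pos _
  have hPtend : Tendsto P atTop (nhds 0) := by
    have h1 : Tendsto (fun hd : ℝ => -(θ * (γUD * hd + 1)) / (2 ^ i * γSD)) atTop atBot := by
      apply Tendsto.atBot_div_const (by positivity)
      apply tendsto_neg_atTop_atBot.comp
      apply Tendsto.const_mul_atTop hθ
      exact tendsto_atTop_add_const_right _ _ (Tendsto.const_mul_atTop hγUD tendsto_id)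
    have h2 := Real.tendsto_exp_atBot.comp h1
    refine h2.congr fun hd => ?_
    simp [hPdef hd]
  set G : ℝ → ℝ := fun q =>
    Real.log 2 + Real.log (1 - q) - Real.log (1 + Real.sqrt (1 - (4 / lam) * q * (1 - q)))
    with hG
  have hGcont : ContinuousAt G 0 := by
    have h1 : ContinuousAt (fun q : ℝ => Real.log (1 - q)) 0 := by
      apply ContinuousAt.log (by fun_prop)
      norm_num
    have hsq : Continuous (fun q : ℝ => Real.sqrt (1 - (4 / lam) * q * (1 - q))) :=
      Continuous.sqrt (by fun_prop)
    have h2 : ContinuousAt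
        (fun q : ℝ => Real.log (1 + Real.sqrt (1 - (4 / lam) * q * (1 - q)))) 0 := by
      apply ContinuousAt.log (continuousAt_const.add hsq.continuousAt)
      simp
    exact (continuousAt_const.add h1).sub h2
  have hG0 : G 0 = 0 := by simp [hG]; norm_num
  have hmain : Tendsto (fun hd => -c * G (P hd)) atTop (nhds 0) := by
    have h3 := (hGcont.tendsto.comp hPtend).const_mul (-c)
    rw [hG0, mul_zero] at h3
    exact h3
  refine hmain.congr' ?_
  filter_upwards [eventually_ge_atTop (0:ℝ)] with hd hhd
  have hp1 : P hd < 1 := by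
    rw [hPdef, Real.exp_lt_one_iff, neg_div, Left.neg_neg_iff]
    positivity
  have hlogP : Real.log (P hd) = -(θ * (γUD * hd + 1)) / (2 ^ i * γSD) := by
    rw [hPdef, Real.log_exp]
  have hkey := key_log lam (P hd) hlam (hP0 hd) hp1
  show -c * G (P hd) = gPlus θ lam γSD γSB γUD γUB i hd - gBar hd
  rw [hgBar]
  unfold gPlus
  rw [show pLvl θ γSD γUD (i + 1) hd = P hd from rfl, hkey, hG, hlogP, hc]
  have h2ipos : (0:ℝ) < (2:ℝ) ^ i := by positivity
  field_simp
  ring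
end

section
/- (Theorem 1, measure-zero ambiguity form.) The set of states (h_d, h_b) ∈ [0,∞)² at which the maximum of i ↦ G_i(h_d, h_b) over i ∈ {0,1,…,N} is attained by more than one index i has two-dimensional Lebesgue measure zero. Hence the maximum-reward power allocation strategy μ*_λ(h_d,h_b) = argmax_{i ∈ {0,…,N}} G_i(h_d,h_b) is unambiguously defined except on a set of measure zero. -/
open Real MeasureTheory

lemma exp_level_subsingleton (a b e : ℝ) (ha : a ≠ 0) :
    {y : ℝ | Real.exp (a * y + b) = e}.Subsingleton := by
  intro y1 h1 y2 h2
  have h : a * y1 + b = a * y2 + b := Real.exp_injective (h1.trans h2.symm)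
  exact mul_left_cancel₀ ha (by linarith)

lemma two_exp_finite (a b c d e : ℝ) (hac : a < c) (hc : c < 0) :
    {y : ℝ | Real.exp (a * y + b) - Real.exp (c * y + d) = e}.Finite := by
  set f : ℝ → ℝ := fun y => Real.exp (a * y + b) - Real.exp (c * y + d) with hf
  set Y : ℝ := (Real.log (-a) + b - Real.log (-c) - d) / (c - a) with hY
  have ha : a < 0 := hac.trans hc
  have hca : 0 < c - a := by linarith
  have hd : ∀ y : ℝ, HasDerivAt f (Real.exp (a*y+b)*a - Real.exp (c*y+d)*c) y := by
    intro y
    have h1 : HasDerivAt (fun y : ℝ => a * y + b) a y := by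
      simpa using ((hasDerivAt_id y).const_mul a).add_const b
    have h2 : HasDerivAt (fun y : ℝ => c * y + d) c y := by
      simpa using ((hasDerivAt_id y).const_mul c).add_const d
    exact h1.exp.sub h2.exp
  have hcont : Continuous f := by fun_prop
  have hpos : ∀ y ∈ Set.Ioi Y, 0 < Real.exp (a*y+b)*a - Real.exp (c*y+d)*c := by
    intro y hy
    have h0 : Real.log (-a) + b - Real.log (-c) - d < y * (c - a) :=
      (div_lt_iff₀ hca).mp hy
    have h1 : Real.log (-a) + (a*y+b) < Real.log (-c) + (c*y+d) := by nlinarith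
    have h2 := Real.exp_lt_exp.mpr h1
    have e1 : Real.exp (Real.log (-a) + (a*y+b)) = (-a) * Real.exp (a*y+b) := by
      rw [Real.exp_add, Real.exp_log (by linarith : (0:ℝ) < -a)]
    have e2 : Real.exp (Real.log (-c) + (c*y+d)) = (-c) * Real.exp (c*y+d) := by
      rw [Real.exp_add, Real.exp_log (by linarith : (0:ℝ) < -c)]
    rw [e1, e2] at h2
    linarith
  have hneg : ∀ y ∈ Set.Iio Y, Real.exp (a*y+b)*a - Real.exp (c*y+d)*c < 0 := by
    intro y hy
    have h0 : y * (c - a) < Real.log (-a) + b - Real.log (-c) - d :=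
      (lt_div_iff₀ hca).mp hy
    have h1 : Real.log (-c) + (c*y+d) < Real.log (-a) + (a*y+b) := by nlinarith
    have h2 := Real.exp_lt_exp.mpr h1
    have e1 : Real.exp (Real.log (-a) + (a*y+b)) = (-a) * Real.exp (a*y+b) := by
      rw [Real.exp_add, Real.exp_log (by linarith : (0:ℝ) < -a)]
    have e2 : Real.exp (Real.log (-c) + (c*y+d)) = (-c) * Real.exp (c*y+d) := by
      rw [Real.exp_add, Real.exp_log (by linarith : (0:ℝ) < -c)]
    rw [e1, e2] at h2
    linarith
  have mono : StrictMonoOn f (Set.Ici Y) :=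
    strictMonoOn_of_deriv_pos (convex_Ici Y) hcont.continuousOn (by
      rw [interior_Ici]; intro y hy; rw [(hd y).deriv]; exact hpos y hy)
  have anti : StrictAntiOn f (Set.Iic Y) :=
    strictAntiOn_of_deriv_neg (convex_Iic Y) hcont.continuousOn (by
      rw [interior_Iic]; intro y hy; rw [(hd y).deriv]; exact hneg y hy)
  have hsub : {y : ℝ | f y = e} ⊆
      ({y : ℝ | f y = e} ∩ Set.Iic Y) ∪ ({y : ℝ | f y = e} ∩ Set.Ici Y) := by
    intro y hy
    rcases le_total y Y with h | h
    · exact Or.inl ⟨hy, h⟩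
    · exact Or.inr ⟨hy, h⟩
  have s1 : ({y : ℝ | f y = e} ∩ Set.Iic Y).Subsingleton :=
    fun y1 h1 y2 h2 => anti.injOn h1.2 h2.2 (h1.1.trans h2.1.symm)
  have s2 : ({y : ℝ | f y = e} ∩ Set.Ici Y).Subsingleton :=
    fun y1 h1 y2 h2 => mono.injOn h1.2 h2.2 (h1.1.trans h2.1.symm)
  exact Set.Finite.subset (s1.finite.union s2.finite) hsub

lemma pairNull (θ lam γSD γSB γUD γUB : ℝ)
    (hθ : 0 < θ) (hlam : 0 < lam) (hγSD : 0 < γSD) (hγSB : 0 < γSB)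
    (hγUD : 0 < γUD) (hγUB : 0 < γUB) (i j : ℕ) (hij : i < j) :
    volume {z : ℝ × ℝ | 0 ≤ z.1 ∧ 0 ≤ z.2 ∧
      gain θ lam γSD γSB γUD γUB i z.1 z.2 = gain θ lam γSD γSB γUD γUB j z.1 z.2} = 0 := by
  set T : Set (ℝ × ℝ) := {z : ℝ × ℝ | 0 ≤ z.1 ∧ 0 ≤ z.2 ∧
      gain θ lam γSD γSB γUD γUB i z.1 z.2 = gain θ lam γSD γSB γUD γUB j z.1 z.2} with hT
  have hj1 : j ≠ 0 := by omega
  -- basic positivity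
  have hD : ∀ k : ℕ, (0:ℝ) < θ * 2 ^ (k - 1) * γSB := by
    intro k; positivity
  have hE : ∀ k : ℕ, (0:ℝ) < 2 ^ (k - 1) * γSD := by
    intro k; positivity
  -- q lemmas
  have hq1 : ∀ (k : ℕ) (y : ℝ), γUB * y ≤ θ → qLvl θ γSB γUB k y = 1 := by
    intro k y hy
    unfold qLvl
    apply min_eq_right
    rw [show (1:ℝ) = Real.exp 0 by simp]
    apply Real.exp_le_exp.mpr
    apply div_nonneg (by linarith) (hD k).le
  have hq2 : ∀ (k : ℕ) (y : ℝ), θ ≤ γUB * y →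
      qLvl θ γSB γUB k y =
        Real.exp ((-γUB / (θ * 2 ^ (k - 1) * γSB)) * y + θ / (θ * 2 ^ (k - 1) * γSB)) := by
    intro k y hy
    unfold qLvl
    rw [min_eq_left]
    · congr 1; field_simp; ring
    · rw [show (1:ℝ) = Real.exp 0 by simp]
      apply Real.exp_le_exp.mpr
      apply div_nonpos_of_nonpos_of_nonneg (by linarith) (hD k).le
  -- p as exp of affine
  have hp : ∀ (k : ℕ) (x : ℝ), pLvl θ γSD γUD k x =
      Real.exp ((-(θ * γUD) / (2 ^ (k - 1) * γSD)) * x + (-θ / (2 ^ (k - 1) * γSD))) := by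
    intro k x
    unfold pLvl
    congr 1
    field_simp
    ring
  -- strict monotonicity of p across levels
  have hplt : 1 ≤ i → ∀ x : ℝ, 0 ≤ x →
      pLvl θ γSD γUD i x < pLvl θ γSD γUD j x := by
    intro hi x hx
    unfold pLvl
    apply Real.exp_lt_exp.mpr
    have ht : (0:ℝ) < θ * (γUD * x + 1) := by nlinarith [mul_nonneg hγUD.le hx]
    have hlt : (2:ℝ) ^ (i - 1) * γSD < 2 ^ (j - 1) * γSD := by
      have : (2:ℝ) ^ (i - 1) < 2 ^ (j - 1) :=
        pow_lt_pow_right₀ (by norm_num) (by omega)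
      nlinarith
    have := div_lt_div_of_pos_left ht (hE i) hlt
    rw [neg_div, neg_div]
    linarith
  -- continuity and measurability
  have hcont : ∀ k : ℕ, Continuous (fun z : ℝ × ℝ => gain θ lam γSD γSB γUD γUB k z.1 z.2) := by
    intro k
    unfold gain pLvl qLvl
    by_cases hk : k = 0
    · simp only [hk, if_true, if_pos]
      exact continuous_const
    · simp only [hk, if_false]
      fun_prop
  have hmeas : MeasurableSet T := by
    have : T = {z : ℝ × ℝ | 0 ≤ z.1} ∩ ({z : ℝ × ℝ | 0 ≤ z.2} ∩
        {z : ℝ × ℝ | gain θ lam γSD γSB γUD γUB i z.1 z.2 =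
          gain θ lam γSD γSB γUD γUB j z.1 z.2}) := rfl
    rw [this]
    exact ((isClosed_le continuous_const continuous_fst).inter
      ((isClosed_le continuous_const continuous_snd).inter
        (isClosed_eq (hcont i) (hcont j)))).measurableSet
  rw [show (volume : Measure (ℝ × ℝ)) = (volume : Measure ℝ).prod volume from Measure.volume_eq_prod ℝ ℝ,
    Measure.measure_prod_null hmeas]
  -- slopes
  set A : ℕ → ℝ := fun k => -γUB / (θ * 2 ^ (k - 1) * γSB) with hA
  set B : ℕ → ℝ := fun k => θ / (θ * 2 ^ (k - 1) * γSB) with hB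
  have hAneg : ∀ k, A k < 0 := fun k => div_neg_of_neg_of_pos (by linarith) (hD k)
  rcases Nat.eq_zero_or_pos i with hi0 | hi1
  · -- i = 0 case
    subst hi0
    have hm : (-(θ * γUD) / (2 ^ (j - 1) * γSD)) ≠ 0 := by
      apply div_ne_zero (by nlinarith) (hE j).ne'
    have hbad : (volume : Measure ℝ)
        {x : ℝ | Real.exp ((-(θ * γUD) / (2 ^ (j - 1) * γSD)) * x + (-θ / (2 ^ (j - 1) * γSD))) = lam} = 0 :=
      (exp_level_subsingleton _ _ _ hm).measure_zero _
    have hae : ∀ᵐ x ∂(volume : Measure ℝ),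
        Real.exp ((-(θ * γUD) / (2 ^ (j - 1) * γSD)) * x + (-θ / (2 ^ (j - 1) * γSD))) ≠ lam :=
      (measure_eq_zero_iff_ae_notMem.mp hbad)
    filter_upwards [hae] with x hxB
    show volume (Prod.mk x ⁻¹' T) = 0
    have hpx : pLvl θ γSD γUD j x ≠ lam := by rw [hp j x]; exact hxB
    refine measure_mono_null ?_
      ((exp_level_subsingleton (A j) (B j) (pLvl θ γSD γUD j x / lam)
        (hAneg j).ne).measure_zero _)
    · rintro y ⟨hy1, hy2, heq⟩
      simp only [gain, reduceIte, if_neg hj1] at heq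
      by_cases hyb : γUB * y ≤ θ
      · rw [hq1 j y hyb] at heq
        exact absurd (by linarith : pLvl θ γSD γUD j x = lam) hpx
      · push_neg at hyb
        rw [hq2 j y hyb.le] at heq
        show Real.exp (A j * y + B j) = pLvl θ γSD γUD j x / lam
        rw [hA, hB]
        simp only
        rw [eq_div_iff hlam.ne']
        linarith
  · -- 1 ≤ i case
    have hi0 : i ≠ 0 := by omega
    apply Filter.Eventually.of_forall
    intro x
    show volume (Prod.mk x ⁻¹' T) = 0
    by_cases hx : 0 ≤ x
    · have hlt : θ * 2 ^ (i - 1) * γSB < θ * 2 ^ (j - 1) * γSB := by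
        have h2 : (2:ℝ) ^ (i - 1) < 2 ^ (j - 1) :=
          pow_lt_pow_right₀ (by norm_num) (by omega)
        exact mul_lt_mul_of_pos_right (mul_lt_mul_of_pos_left h2 hθ) hγSB
      have hAij : A i < A j := by
        have := div_lt_div_of_pos_left hγUB (hD i) hlt
        rw [hA]
        simp only
        rw [neg_div, neg_div]
        linarith
      refine measure_mono_null ?_
        ((two_exp_finite (A i) (B i) (A j) (B j)
          ((pLvl θ γSD γUD i x - pLvl θ γSD γUD j x) / lam) hAij (hAneg j)).measure_zero _)
      rintro y ⟨hy1, hy2, heq⟩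
      simp only [gain, if_neg hi0, if_neg hj1] at heq
      by_cases hyb : γUB * y ≤ θ
      · rw [hq1 i y hyb, hq1 j y hyb] at heq
        exact absurd (by linarith : pLvl θ γSD γUD i x = pLvl θ γSD γUD j x)
          (hplt hi1 x hx).ne
      · push_neg at hyb
        rw [hq2 i y hyb.le, hq2 j y hyb.le] at heq
        show Real.exp (A i * y + B i) - Real.exp (A j * y + B j) = _
        rw [hA, hB]
        simp only
        rw [eq_div_iff hlam.ne']
        linarith
    · have : Prod.mk x ⁻¹' T = ∅ :=
        Set.eq_empty_iff_forall_notMem.mpr fun y hy => hx hy.1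
      rw [this, measure_empty]

/-- Theorem 1, measure-zero ambiguity form: the set of states
`(h_d, h_b) ∈ [0,∞)²` at which the maximum of `i ↦ G_i(h_d,h_b)` over `i ∈ {0,…,N}` is
attained by more than one index has two-dimensional Lebesgue measure zero. -/
theorem stmt12 (N : ℕ) (hN : 1 ≤ N) (θ lam γSD γSB γUD γUB : ℝ)
    (hθ : 0 < θ) (hlam : 0 < lam) (hγSD : 0 < γSD) (hγSB : 0 < γSB)
    (hγUD : 0 < γUD) (hγUB : 0 < γUB) :
    volume {z : ℝ × ℝ | 0 ≤ z.1 ∧ 0 ≤ z.2 ∧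
      ∃ i j : ℕ, i ≤ N ∧ j ≤ N ∧ i ≠ j ∧
        gain θ lam γSD γSB γUD γUB i z.1 z.2 = gain θ lam γSD γSB γUD γUB j z.1 z.2 ∧
        (∀ k : ℕ, k ≤ N →
          gain θ lam γSD γSB γUD γUB k z.1 z.2 ≤
            gain θ lam γSD γSB γUD γUB i z.1 z.2)} = 0 := by
  apply measure_mono_null (t := ⋃ (p : ℕ × ℕ),
    if p.1 < p.2 then {z : ℝ × ℝ | 0 ≤ z.1 ∧ 0 ≤ z.2 ∧
      gain θ lam γSD γSB γUD γUB p.1 z.1 z.2 = gain θ lam γSD γSB γUD γUB p.2 z.1 z.2}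
    else ∅)
  · rintro z ⟨hz1, hz2, i, j, hi, hj, hne, heq, -⟩
    rcases lt_or_gt_of_ne hne with h | h
    · exact Set.mem_iUnion.mpr ⟨(i, j), by simp only [h, if_true]; exact ⟨hz1, hz2, heq⟩⟩
    · exact Set.mem_iUnion.mpr ⟨(j, i), by simp only [h, if_true]; exact ⟨hz1, hz2, heq.symm⟩⟩
  · apply measure_iUnion_null
    intro p
    split
    · exact pairNull θ lam γSD γSB γUD γUB hθ hlam hγSD hγSB hγUD hγUB p.1 p.2 ‹_›
    · simp
end

section
/- (Unique maximizer of τ_h.) The function τ_h attains its unique global maximum on (0,∞) at λ = λ_M, with maximum value τ_h(λ_M) = λ_M/W; that is, τ_h(λ) < λ_M/W for every λ > 0 with λ ≠ λ_M, and τ_h(λ_M) = λ_M/W. -/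
open Real

/-- unique maximizer of `τ_h`: with `z₁ = θ·γ_SB/ρ`, `z₂ = θ·γ_UD/ξ`,
`τ_h(λ) = λ / ((1+z₂+z₁z₂)·e^{θ/ρ}·e^{(θ/ξ)(z₁+1)}·λ^{z₁+1} + z₁W/(1+z₁))` and
`λ_M = e^{−θ/ξ}·(W·e^{−θ/ρ}/((1+z₁)(1+z₂+z₁z₂)))^{1/(z₁+1)}`, the function `τ_h` attains
its unique global maximum on `(0,∞)` at `λ_M`, with value `λ_M/W`. -/
theorem stmt14 (θ ρ ξ γSB γUD W : ℝ)
    (hθ : 0 < θ) (hρ : 0 < ρ) (hξ : 0 < ξ) (hγSB : 0 < γSB) (hγUD : 0 < γUD) (hW : 0 < W)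
    (z₁ z₂ : ℝ) (hz₁ : z₁ = θ * γSB / ρ) (hz₂ : z₂ = θ * γUD / ξ)
    (τh : ℝ → ℝ)
    (hτh : ∀ lam : ℝ, τh lam = lam /
      ((1 + z₂ + z₁ * z₂) * Real.exp (θ / ρ) * Real.exp ((θ / ξ) * (z₁ + 1)) *
          lam ^ (z₁ + 1) + z₁ * W / (1 + z₁)))
    (lamM : ℝ)
    (hlamM : lamM = Real.exp (-θ / ξ) *
      (W * Real.exp (-θ / ρ) / ((1 + z₁) * (1 + z₂ + z₁ * z₂))) ^ (1 / (z₁ + 1))) :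
    τh lamM = lamM / W ∧ ∀ lam : ℝ, 0 < lam → lam ≠ lamM → τh lam < lamM / W := by
  have hz₁pos : 0 < z₁ := by rw [hz₁]; positivity
  have hz₂pos : 0 < z₂ := by rw [hz₂]; positivity
  have hSpos : 0 < 1 + z₂ + z₁ * z₂ := by positivity
  have hppos : 0 < z₁ + 1 := by linarith
  have h1z₁ : 0 < 1 + z₁ := by linarith
  set A : ℝ := (1 + z₂ + z₁ * z₂) * Real.exp (θ / ρ) * Real.exp ((θ / ξ) * (z₁ + 1)) with hA
  have hApos : 0 < A := by positivity
  set X : ℝ := W * Real.exp (-θ / ρ) / ((1 + z₁) * (1 + z₂ + z₁ * z₂)) with hX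
  have hXpos : 0 < X := by positivity
  have hlamMpos : 0 < lamM := by
    rw [hlamM]; positivity
  -- key: A * lamM ^ (z₁+1) = W / (1+z₁)
  have hkey : A * lamM ^ (z₁ + 1) = W / (1 + z₁) := by
    have h1 : lamM ^ (z₁ + 1) = Real.exp ((-θ / ξ) * (z₁ + 1)) * X := by
      rw [hlamM, Real.mul_rpow (Real.exp_pos _).le (Real.rpow_nonneg hXpos.le _)]
      rw [← Real.rpow_mul hXpos.le, one_div_mul_cancel hppos.ne', Real.rpow_one]
      congr 1
      rw [Real.rpow_def_of_pos (Real.exp_pos _), Real.log_exp]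
    have hE1 : Real.exp (θ / ρ) * Real.exp (-θ / ρ) = 1 := by
      rw [← Real.exp_add, show θ / ρ + -θ / ρ = 0 by ring, Real.exp_zero]
    have hE2 : Real.exp (θ / ξ * (z₁ + 1)) * Real.exp (-θ / ξ * (z₁ + 1)) = 1 := by
      rw [← Real.exp_add, show θ / ξ * (z₁ + 1) + -θ / ξ * (z₁ + 1) = 0 by ring, Real.exp_zero]
    rw [h1, hA, hX]
    calc (1 + z₂ + z₁ * z₂) * Real.exp (θ / ρ) * Real.exp (θ / ξ * (z₁ + 1)) *
          (Real.exp (-θ / ξ * (z₁ + 1)) * (W * Real.exp (-θ / ρ) / ((1 + z₁) * (1 + z₂ + z₁ * z₂))))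
        = (Real.exp (θ / ρ) * Real.exp (-θ / ρ)) * (Real.exp (θ / ξ * (z₁ + 1)) *
            Real.exp (-θ / ξ * (z₁ + 1))) * ((1 + z₂ + z₁ * z₂) * W / ((1 + z₁) * (1 + z₂ + z₁ * z₂))) := by
          ring
      _ = (1 + z₂ + z₁ * z₂) * W / ((1 + z₁) * (1 + z₂ + z₁ * z₂)) := by rw [hE1, hE2]; ring
      _ = W / (1 + z₁) := by field_simp
  have hBpos : 0 < z₁ * W / (1 + z₁) := by positivity
  -- denominator value and positivity for general lam
  have hdenpos : ∀ lam : ℝ, 0 < lam → 0 < A * lam ^ (z₁ + 1) + z₁ * W / (1 + z₁) := by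
    intro lam hlam
    have : 0 < lam ^ (z₁ + 1) := Real.rpow_pos_of_pos hlam _
    positivity
  have hτ : ∀ lam : ℝ, τh lam = lam / (A * lam ^ (z₁ + 1) + z₁ * W / (1 + z₁)) := by
    intro lam; rw [hτh lam, hA]
  have hM : τh lamM = lamM / W := by
    rw [hτ lamM, hkey]
    congr 1
    field_simp
  refine ⟨hM, fun lam hlam hne => ?_⟩
  rw [hτ lam]
  rw [div_lt_div_iff₀ (hdenpos lam hlam) hW]
  -- write lam = t * lamM
  set t : ℝ := lam / lamM with ht
  have htpos : 0 < t := div_pos hlam hlamMpos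
  have htne : t ≠ 1 := by
    intro h
    apply hne
    have := (div_eq_one_iff_eq hlamMpos.ne').mp (ht ▸ h)
    exact this
  have hlameq : lam = t * lamM := by
    rw [ht, div_mul_cancel₀ _ hlamMpos.ne']
  have hpow : lam ^ (z₁ + 1) = t ^ (z₁ + 1) * lamM ^ (z₁ + 1) := by
    rw [hlameq, Real.mul_rpow htpos.le hlamMpos.le]
  -- Bernoulli: 1 + (z₁+1)*(t-1) < t^(z₁+1)
  have hbern : 1 + (z₁ + 1) * (t - 1) < t ^ (z₁ + 1) := by
    have := one_add_mul_self_lt_rpow_one_add (s := t - 1) (by linarith) (by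
      intro h; apply htne; linarith) (p := z₁ + 1) (by linarith)
    have h11 : 1 + (t - 1) = t := by ring
    rwa [h11] at this
  rw [hpow]
  have hAl : A * (t ^ (z₁ + 1) * lamM ^ (z₁ + 1)) = t ^ (z₁ + 1) * (W / (1 + z₁)) := by
    rw [show A * (t ^ (z₁ + 1) * lamM ^ (z₁ + 1)) = t ^ (z₁ + 1) * (A * lamM ^ (z₁ + 1)) by ring,
      hkey]
  rw [hAl, hlameq]
  have goal' : (1 + z₁) * t < t ^ (z₁ + 1) + z₁ := by nlinarith
  have hfrac : t * W < (t ^ (z₁ + 1) * (W / (1 + z₁)) + z₁ * W / (1 + z₁)) := by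
    have h2 : t ^ (z₁ + 1) * (W / (1 + z₁)) + z₁ * W / (1 + z₁) =
        (t ^ (z₁ + 1) + z₁) * W / (1 + z₁) := by ring
    rw [h2, lt_div_iff₀ h1z₁]
    nlinarith
  calc t * lamM * W = lamM * (t * W) := by ring
    _ < lamM * (t ^ (z₁ + 1) * (W / (1 + z₁)) + z₁ * W / (1 + z₁)) := by
        exact (mul_lt_mul_iff_right₀ hlamMpos).mpr hfrac
end

section
/- If W ≤ exp(θ/ρ)·(1+z₁)·(1+z₂+z₁·z₂), then τ_h is strictly monotonically decreasing on the interval [exp(−θ/ξ), ∞): for all λ, λ' with exp(−θ/ξ) ≤ λ < λ', one has τ_h(λ') < τ_h(λ). -/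
open Real Set

/-!
Write `τ_h(λ) = λ / (A λ^{z₁+1} + B)`. Its derivative has the sign of `B - z₁ A λ^{z₁+1}`,
which increases in `λ`, so it suffices that it is `≤ 0` at `λ₀ = e^{-θ/ξ}`. There the factor
`e^{(θ/ξ)(z₁+1)}` of `A` cancels against `λ₀^{z₁+1}`, and `B ≤ z₁ A λ₀^{z₁+1}` becomes exactly
the hypothesis on `W`.
-/

theorem hasDerivAt_div_mul_rpow_add {A B z x : ℝ} (hx : 0 < x) (hD : A * x ^ (z + 1) + B ≠ 0) :
    HasDerivAt (fun y => y / (A * y ^ (z + 1) + B))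
      ((B - z * A * x ^ (z + 1)) / (A * x ^ (z + 1) + B) ^ 2) x := by
  have hDen : HasDerivAt (fun y => A * y ^ (z + 1) + B) (A * ((z + 1) * x ^ z)) x := by
    simpa using ((Real.hasDerivAt_rpow_const (p := z + 1) (Or.inl hx.ne')).const_mul A).add_const B
  refine ((hasDerivAt_id x).div hDen hD).congr_deriv ?_
  rw [id, Real.rpow_add_one hx.ne']
  ring

theorem strictAntiOn_div_mul_rpow_add {A B z c : ℝ} (hA : 0 < A) (hB : 0 ≤ B) (hz : 0 < z)
    (hc : 0 < c) (hBc : B ≤ z * A * c ^ (z + 1)) :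
    StrictAntiOn (fun y => y / (A * y ^ (z + 1) + B)) (Ici c) := by
  have hD : ∀ x, 0 < x → 0 < A * x ^ (z + 1) + B := fun x hx => by positivity
  refine strictAntiOn_of_deriv_neg (convex_Ici c) (fun x hx => ?_) (fun x hx => ?_)
  · exact (hasDerivAt_div_mul_rpow_add (hc.trans_le hx) (hD x (hc.trans_le hx)).ne')
      |>.continuousAt.continuousWithinAt
  · rw [interior_Ici] at hx
    have hx0 : 0 < x := hc.trans hx
    rw [(hasDerivAt_div_mul_rpow_add hx0 (hD x hx0).ne').deriv]
    have hpow : c ^ (z + 1) < x ^ (z + 1) := Real.rpow_lt_rpow hc.le hx (by positivity)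
    have : z * A * c ^ (z + 1) < z * A * x ^ (z + 1) := by gcongr
    exact div_neg_of_neg_of_pos (by linarith) (by positivity)

/-- with `z₁ = θ·γ_SB/ρ`, `z₂ = θ·γ_UD/ξ` and
`τ_h(λ) = λ / ((1+z₂+z₁z₂)·e^{θ/ρ}·e^{(θ/ξ)(z₁+1)}·λ^{z₁+1} + z₁W/(1+z₁))`,
if `W ≤ e^{θ/ρ}·(1+z₁)·(1+z₂+z₁z₂)` then `τ_h` is strictly decreasing on
`[e^{−θ/ξ}, ∞)`. -/
theorem stmt16 (θ ρ ξ γSB γUD W : ℝ)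
    (hθ : 0 < θ) (hρ : 0 < ρ) (hξ : 0 < ξ) (hγSB : 0 < γSB) (hγUD : 0 < γUD) (hW : 0 < W)
    (z₁ z₂ : ℝ) (hz₁ : z₁ = θ * γSB / ρ) (hz₂ : z₂ = θ * γUD / ξ)
    (τh : ℝ → ℝ)
    (hτh : ∀ lam : ℝ, τh lam = lam /
      ((1 + z₂ + z₁ * z₂) * Real.exp (θ / ρ) * Real.exp ((θ / ξ) * (z₁ + 1)) *
          lam ^ (z₁ + 1) + z₁ * W / (1 + z₁)))
    (hWsmall : W ≤ Real.exp (θ / ρ) * (1 + z₁) * (1 + z₂ + z₁ * z₂)) :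
    ∀ lam lam' : ℝ, Real.exp (-θ / ξ) ≤ lam → lam < lam' → τh lam' < τh lam := by
  have hz₁0 : 0 < z₁ := by rw [hz₁]; positivity
  have hz₂0 : 0 < z₂ := by rw [hz₂]; positivity
  set C := (1 + z₂ + z₁ * z₂) * Real.exp (θ / ρ) with hC
  have hlam₀ : C * Real.exp ((θ / ξ) * (z₁ + 1)) * Real.exp (-θ / ξ) ^ (z₁ + 1) = C := by
    rw [← Real.exp_mul, mul_assoc, ← Real.exp_add, neg_div, neg_mul, add_neg_cancel, exp_zero,
      mul_one]
  have hB : z₁ * W / (1 + z₁) ≤ z₁ * (C * Real.exp ((θ / ξ) * (z₁ + 1))) *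
      Real.exp (-θ / ξ) ^ (z₁ + 1) := by
    rw [mul_assoc, hlam₀, div_le_iff₀ (by positivity), hC]
    nlinarith
  have hanti := strictAntiOn_div_mul_rpow_add (by positivity) (by positivity) hz₁0
    (Real.exp_pos _) hB
  intro lam lam' hlam hlt
  simpa only [hτh] using hanti hlam (hlam.trans hlt.le) hlt
end

section
/- (Closed-form throughput, high-λ regime, single power level.) Assume λ ≥ exp(−θ/ξ). Then [∫₀^∞ ∫_{g₀(x)}^∞ p₁(x)·e^{−(x+y)} dy dx] / (1 + W·∫₀^∞ ∫_{g₀(x)}^∞ q₁(y)·e^{−(x+y)} dy dx) = λ / ((1+z₂+z₁·z₂)·exp(θ/ρ)·exp((θ/ξ)·(z₁+1))·λ^{z₁+1} + z₁·W/(1+z₁)). (Note that g₀(x) ≥ θ/ρ for all x ≥ 0 in this regime, so q₁(y) = exp(−(ρ·y − θ)/(θ·γ_SB)) on the integration region.) -/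
/-!
Since `λ ≥ e^{-θ/ξ}`, the quantity `L = θ/ξ + ln λ` is nonnegative, so `g₀(x) ≥ θ/ρ` for `x ≥ 0`
and the minimum in `q₁` is inactive on the integration region. Both integrands are then
exponentials of affine functions of `(x, y)` on a region `{x > 0, y > s x + b}`, whose iterated
integral is explicit. Numerator and denominator share the factor `E / A` with
`E = exp (-(θ/ρ + (z₁ + 1) L))` and `A = 1 + z₂ + z₁ z₂`; cancelling it leaves the closed form.
-/

open Real MeasureTheory Set

theorem integral_exp_neg_mul_add_Ioi {c : ℝ} (hc : 0 < c) (a d : ℝ) :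
    ∫ y in Ioi a, exp (-(c * y + d)) = exp (-(c * a + d)) / c := by
  have hsplit : ∀ y, exp (-(c * y + d)) = exp (-d) * exp (-c * y) := fun y => by
    rw [← exp_add]; ring_nf
  simp_rw [hsplit, integral_const_mul, integral_exp_mul_Ioi (neg_neg_of_pos hc)]
  field_simp

theorem integral_Ioi_integral_Ioi_eq_of_eq_exp_neg {f : ℝ → ℝ → ℝ} {s b k c d : ℝ} (hc : 0 < c)
    (hkcs : 0 < k + c * s)
    (hf : ∀ x > 0, ∀ y > s * x + b, f x y = exp (-(k * x + c * y + d))) :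
    ∫ x in Ioi 0, ∫ y in Ioi (s * x + b), f x y = exp (-(c * b + d)) / (c * (k + c * s)) := by
  have hinner : EqOn (fun x => ∫ y in Ioi (s * x + b), f x y)
      (fun x => exp (-((k + c * s) * x + (c * b + d))) / c) (Ioi 0) := by
    intro x hx
    simp only
    rw [setIntegral_congr_fun measurableSet_Ioi (fun y hy => hf x hx y hy)]
    simp_rw [show ∀ y, k * x + c * y + d = c * y + (k * x + d) from fun y => by ring]
    rw [integral_exp_neg_mul_add_Ioi hc]
    ring_nf
  rw [setIntegral_congr_fun measurableSet_Ioi hinner, integral_div,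
    integral_exp_neg_mul_add_Ioi hkcs, mul_zero, zero_add, div_div, mul_comm (k + c * s)]

theorem integral_Ioi_integral_Ioi_exp_mul_exp_neg_add {a t s b : ℝ} (h : 0 < 1 + a + s) :
    ∫ x in Ioi 0, ∫ y in Ioi (s * x + b), exp (-(a * x + t)) * exp (-(x + y)) =
      exp (-(b + t)) / (1 + a + s) := by
  rw [integral_Ioi_integral_Ioi_eq_of_eq_exp_neg (k := 1 + a) (c := 1) (d := t) one_pos
    (by linarith) fun x _ y _ => by rw [← exp_add]; ring_nf]
  ring_nf

theorem integral_Ioi_integral_Ioi_min_exp_mul_exp_neg_add {z s b τ : ℝ} (hz : 0 < z)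
    (hs : 0 ≤ s) (hτb : τ ≤ b) :
    ∫ x in Ioi 0, ∫ y in Ioi (s * x + b), min (exp (-(y - τ) / z)) 1 * exp (-(x + y)) =
      z / (z + 1) * exp (-(b + (b - τ) / z)) / (1 + (z + 1) / z * s) := by
  rw [integral_Ioi_integral_Ioi_eq_of_eq_exp_neg (k := 1) (c := (z + 1) / z) (d := -(τ / z))
    (by positivity) (by positivity) fun x hx y hy => ?_]
  · rw [show (z + 1) / z * b + -(τ / z) = b + (b - τ) / z by field_simp; ring]
    field_simp
  · have hτy : τ ≤ y := by nlinarith [mul_nonneg hs (le_of_lt hx)]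
    rw [min_eq_left (exp_le_one_iff.mpr (div_nonpos_of_nonpos_of_nonneg (by linarith) hz.le)),
      ← exp_add]
    congr 1
    field_simp
    ring

theorem mul_exp_mul_exp_mul_rpow {lam : ℝ} (hlam : 0 < lam) (a u v z : ℝ) :
    a * exp u * exp (v * (z + 1)) * lam ^ (z + 1) =
      a / exp (-(u + (z + 1) * (v + log lam))) := by
  rw [rpow_def_of_pos hlam, exp_neg, div_inv_eq_mul, mul_assoc, mul_assoc, ← exp_add, ← exp_add]
  ring_nf

theorem mul_div_div_one_add_mul_div {l E A W r : ℝ} (hE : E ≠ 0) (hA : A ≠ 0) :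
    l * E / A / (1 + W * (r * E / A)) = l / (A / E + r * W) := by
  rw [show 1 + W * (r * E / A) = (A + r * W * E) / A by field_simp,
    div_div_div_cancel_right₀ hA, show A / E + r * W = (A + r * W * E) / E by field_simp,
    div_div_eq_mul_div]

theorem stmt18_general (θ ρ ξ γSB γUD W lam : ℝ)
    (hθ : 0 < θ) (hρ : 0 < ρ) (hξ : 0 < ξ) (hγSB : 0 < γSB) (hγUD : 0 < γUD)
    (z₁ z₂ : ℝ) (hz₁ : z₁ = θ * γSB / ρ) (hz₂ : z₂ = θ * γUD / ξ)
    (p₁ q₁ g₀ : ℝ → ℝ)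
    (hp₁ : ∀ x : ℝ, p₁ x = Real.exp (-(θ * (γUD * x + 1)) / ξ))
    (hq₁ : ∀ y : ℝ, q₁ y = min (Real.exp (-(ρ * y - θ) / (θ * γSB))) 1)
    (hg₀ : ∀ x : ℝ, g₀ x = z₁ * z₂ * x + θ / ρ + z₁ * (θ / ξ + Real.log lam))
    (hlam : Real.exp (-θ / ξ) ≤ lam) :
    (∫ x in Set.Ioi (0 : ℝ), ∫ y in Set.Ioi (g₀ x), p₁ x * Real.exp (-(x + y))) /
        (1 + W * ∫ x in Set.Ioi (0 : ℝ), ∫ y in Set.Ioi (g₀ x),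
          q₁ y * Real.exp (-(x + y))) =
      lam / ((1 + z₂ + z₁ * z₂) * Real.exp (θ / ρ) * Real.exp ((θ / ξ) * (z₁ + 1)) *
          lam ^ (z₁ + 1) + z₁ * W / (1 + z₁)) := by
  have hlam_pos : 0 < lam := (exp_pos _).trans_le hlam
  set L := θ / ξ + log lam with hL
  have hL0 : 0 ≤ L := by
    have := log_le_log (exp_pos _) hlam
    rw [log_exp, neg_div] at this
    linarith
  have hz₁pos : 0 < z₁ := by rw [hz₁]; positivity
  have hz₂pos : 0 < z₂ := by rw [hz₂]; positivity
  obtain rfl : p₁ = fun x => exp (-(z₂ * x + θ / ξ)) :=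
    funext fun x => by rw [hp₁, hz₂]; congr 1; field_simp
  obtain rfl : q₁ = fun y => min (exp (-(y - θ / ρ) / z₁)) 1 :=
    funext fun y => by rw [hq₁, hz₁]; field_simp
  obtain rfl : g₀ = fun x => z₁ * z₂ * x + (θ / ρ + z₁ * L) :=
    funext fun x => by rw [hg₀]; ring
  have hnum_exp : exp (-(θ / ρ + z₁ * L + θ / ξ)) = lam * exp (-(θ / ρ + (z₁ + 1) * L)) := by
    rw [← exp_log hlam_pos, ← exp_add, hL]; ring_nf
  have hden_exp : θ / ρ + z₁ * L + (θ / ρ + z₁ * L - θ / ρ) / z₁ = θ / ρ + (z₁ + 1) * L := by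
    field_simp; ring
  have hA : 1 + (z₁ + 1) / z₁ * (z₁ * z₂) = 1 + z₂ + z₁ * z₂ := by
    field_simp; ring
  have hb : θ / ρ ≤ θ / ρ + z₁ * L := le_add_of_nonneg_right (by positivity)
  beta_reduce
  rw [integral_Ioi_integral_Ioi_exp_mul_exp_neg_add (by positivity),
    integral_Ioi_integral_Ioi_min_exp_mul_exp_neg_add hz₁pos (by positivity) hb,
    hnum_exp, hden_exp, hA, mul_exp_mul_exp_mul_rpow hlam_pos, ← hL,
    mul_div_div_one_add_mul_div (exp_pos _).ne' (by positivity)]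
  ring

/-- closed-form throughput, high-λ regime, single power level: for
`λ ≥ e^{−θ/ξ}`, with `p₁(x) = exp(−θ(γ_UD x + 1)/ξ)`,
`q₁(y) = min(exp(−(ρy−θ)/(θγ_SB)), 1)` and `g₀(x) = z₁z₂x + θ/ρ + z₁(θ/ξ + ln λ)`,
the throughput ratio of double integrals equals the closed form `τ_h(λ)`. -/
theorem stmt18 (θ ρ ξ γSB γUD W lam : ℝ)
    (hθ : 0 < θ) (hρ : 0 < ρ) (hξ : 0 < ξ) (hγSB : 0 < γSB) (hγUD : 0 < γUD) (hW : 0 < W)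
    (hlam0 : 0 < lam)
    (z₁ z₂ : ℝ) (hz₁ : z₁ = θ * γSB / ρ) (hz₂ : z₂ = θ * γUD / ξ)
    (p₁ q₁ g₀ : ℝ → ℝ)
    (hp₁ : ∀ x : ℝ, p₁ x = Real.exp (-(θ * (γUD * x + 1)) / ξ))
    (hq₁ : ∀ y : ℝ, q₁ y = min (Real.exp (-(ρ * y - θ) / (θ * γSB))) 1)
    (hg₀ : ∀ x : ℝ, g₀ x = z₁ * z₂ * x + θ / ρ + z₁ * (θ / ξ + Real.log lam))
    (hlam : Real.exp (-θ / ξ) ≤ lam) :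
    (∫ x in Set.Ioi (0 : ℝ), ∫ y in Set.Ioi (g₀ x), p₁ x * Real.exp (-(x + y))) /
        (1 + W * ∫ x in Set.Ioi (0 : ℝ), ∫ y in Set.Ioi (g₀ x),
          q₁ y * Real.exp (-(x + y))) =
      lam / ((1 + z₂ + z₁ * z₂) * Real.exp (θ / ρ) * Real.exp ((θ / ξ) * (z₁ + 1)) *
          lam ^ (z₁ + 1) + z₁ * W / (1 + z₁)) :=
  stmt18_general θ ρ ξ γSB γUD W lam hθ hρ hξ hγSB hγUD z₁ z₂ hz₁ hz₂ p₁ q₁ g₀ hp₁ hq₁ hg₀ hlam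
end

section
/- (Closed-form throughput, low-λ regime, single power level.) Assume 0 < λ < exp(−θ/ξ), so that h* = −(1/z₂)·ln λ − 1/γ_UD > 0, and define the boundary function g̃₀(x) = 0 for 0 ≤ x ≤ h* and g̃₀(x) = g₀(x) for x > h*. Then [∫₀^∞ ∫_{g̃₀(x)}^∞ p₁(x)·e^{−(x+y)} dy dx] / (1 + W·∫₀^∞ ∫_{g̃₀(x)}^∞ q₁(y)·e^{−(x+y)} dy dx) = (N₁ − N₂·λ^{1/z₂ + 1}) / (N₃ − N₄·λ^{1/z₂}). -/
/-!
For fixed `x` each inner integral is an exponential tail in `y`. The boundary `g̃₀` vanishes up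
to `h*` and is affine, `g₀ x = θ/ρ + z₁ z₂ (x - h*)`, beyond it, while `q₁` equals `1` below
`θ/ρ` and `exp (-(y - θ/ρ)/z₁)` above it. Hence both outer integrands are exponentials on
`(0, h*]` and on `(h*, ∞)`, and each outer integral splits at `h*` into two elementary pieces.
The closed form then follows from `exp (-h*) = λ^{1/z₂} e^{1/γ_UD}` and
`exp (-θ/ξ - z₂ h*) = λ`.
-/

open Real MeasureTheory Set

lemma integrableOn_exp_neg_mul_sub {b : ℝ} (hb : 0 < b) (c d : ℝ) :
    IntegrableOn (fun x => exp (-(b * (x - d)))) (Ioi c) := by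
  refine IntegrableOn.congr_fun ((integrableOn_exp_mul_Ioi (neg_neg_of_pos hb) c).const_mul
    (exp (b * d))) (fun x _ => ?_) measurableSet_Ioi
  rw [← exp_add]; ring_nf

lemma integral_Ioi_exp_neg_mul_sub {b : ℝ} (hb : 0 < b) (c d : ℝ) :
    ∫ x in Ioi c, exp (-(b * (x - d))) = exp (-(b * (c - d))) / b := by
  have hsplit : ∀ x, exp (-(b * (x - d))) = exp (b * d) * exp (-b * x) := fun x => by
    rw [← exp_add]; ring_nf
  simp_rw [hsplit, integral_const_mul, integral_exp_mul_Ioi (neg_neg_of_pos hb)]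
  rw [neg_div_neg_eq, mul_div_assoc]

lemma integral_Ioi_ite_exp {h a b : ℝ} (hh : 0 ≤ h) (ha : 0 < a) (hb : 0 < b) (A B : ℝ) :
    ∫ x in Ioi 0, (if x ≤ h then A * exp (-(a * x)) else B * exp (-(b * (x - h)))) =
      A * (1 - exp (-(a * h))) / a + B / b := by
  set F := fun x => if x ≤ h then A * exp (-(a * x)) else B * exp (-(b * (x - h)))
  have hhead : EqOn F (fun x => A * exp (-(a * (x - 0)))) (uIcc 0 h) := fun x hx => by
    simp [F, if_pos (uIcc_of_le hh ▸ hx).2]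
  have htail : EqOn F (fun x => B * exp (-(b * (x - h)))) (Ioi h) := fun x (hx : h < x) => by
    simp [F, if_neg (not_le.mpr hx)]
  have hhead_int : IntegrableOn (fun x => A * exp (-(a * (x - 0)))) (Ioi 0) :=
    (integrableOn_exp_neg_mul_sub ha 0 0).const_mul A
  rw [← intervalIntegral.integral_interval_add_Ioi'
      (((intervalIntegrable_iff_integrableOn_Ioc_of_le hh).2
        (hhead_int.mono_set Ioc_subset_Ioi_self)).congr (hhead.symm.mono uIoc_subset_uIcc))
      (IntegrableOn.congr_fun ((integrableOn_exp_neg_mul_sub hb h h).const_mul B) htail.symm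
        measurableSet_Ioi),
    intervalIntegral.integral_congr hhead, setIntegral_congr_fun measurableSet_Ioi htail,
    ← intervalIntegral.integral_Ioi_sub_Ioi hhead_int hh]
  simp only [integral_const_mul, integral_Ioi_exp_neg_mul_sub ha, integral_Ioi_exp_neg_mul_sub hb]
  simp only [sub_self, mul_zero, neg_zero, exp_zero, sub_zero]
  ring

/-- The boundary `g̃₀` of the statement, with `g₀ x` written as `t + m * (x - h)`. -/
noncomputable def truncatedBoundary (h t m x : ℝ) : ℝ := if x ≤ h then 0 else t + m * (x - h)

lemma integral_Ioi_exp_neg_add (x g : ℝ) : ∫ y in Ioi g, exp (-(x + y)) = exp (-(x + g)) := by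
  simp_rw [neg_add, exp_add, integral_const_mul, integral_exp_neg_Ioi]

lemma integral_exp_above_truncatedBoundary {h s m : ℝ} (hh : 0 ≤ h) (hs : 0 ≤ s) (hm : 0 ≤ m)
    (t c : ℝ) :
    ∫ x in Ioi 0, ∫ y in Ioi (truncatedBoundary h t m x), exp (c - s * x) * exp (-(x + y)) =
      exp c * ((1 - exp (-((1 + s) * h))) / (1 + s) +
        exp (-((1 + s) * h)) * exp (-t) / (1 + s + m)) := by
  have hinner : ∀ x, ∫ y in Ioi (truncatedBoundary h t m x), exp (c - s * x) * exp (-(x + y)) =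
      if x ≤ h then exp c * exp (-((1 + s) * x))
      else exp c * exp (-((1 + s) * h)) * exp (-t) * exp (-((1 + s + m) * (x - h))) := by
    intro x
    rw [integral_const_mul, integral_Ioi_exp_neg_add, truncatedBoundary]
    split_ifs
    all_goals simp only [← exp_add]; ring_nf
  simp_rw [hinner]
  rw [integral_Ioi_ite_exp hh (by positivity) (by positivity)]
  ring

lemma min_exp_neg_sub_div_one_of_le {t z y : ℝ} (hz : 0 < z) (hy : y ≤ t) :
    min (exp (-(y - t) / z)) 1 = 1 :=
  min_eq_right (one_le_exp (div_nonneg (by linarith) hz.le))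

lemma min_exp_neg_sub_div_one_mul_exp_neg_of_le {t z y : ℝ} (hz : 0 < z) (hy : t ≤ y) :
    min (exp (-(y - t) / z)) 1 * exp (-y) = exp (-t) * exp (-((1 + z⁻¹) * (y - t))) := by
  rw [min_eq_left (exp_le_one_iff.2 (div_nonpos_of_nonpos_of_nonneg (by linarith) hz.le)),
    ← exp_add, ← exp_add]
  ring_nf

lemma integral_Ioi_min_exp_neg_sub_div_one_mul_exp_neg_of_le {t z g : ℝ} (hz : 0 < z)
    (hg : t ≤ g) :
    ∫ y in Ioi g, min (exp (-(y - t) / z)) 1 * exp (-y) =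
      exp (-t) * (exp (-((1 + z⁻¹) * (g - t))) / (1 + z⁻¹)) := by
  rw [setIntegral_congr_fun measurableSet_Ioi
      fun y (hy : g < y) => min_exp_neg_sub_div_one_mul_exp_neg_of_le hz (hg.trans hy.le),
    integral_const_mul, integral_Ioi_exp_neg_mul_sub (by positivity)]

lemma integral_Ioi_zero_min_exp_neg_sub_div_one_mul_exp_neg {t z : ℝ} (ht : 0 ≤ t) (hz : 0 < z) :
    ∫ y in Ioi 0, min (exp (-(y - t) / z)) 1 * exp (-y) = 1 - exp (-t) / (1 + z) := by
  have hpiece : ∀ y, min (exp (-(y - t) / z)) 1 * exp (-y) =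
      if y ≤ t then 1 * exp (-(1 * y)) else exp (-t) * exp (-((1 + z⁻¹) * (y - t))) := by
    intro y
    split_ifs with hy
    · simp only [min_exp_neg_sub_div_one_of_le hz hy, one_mul]
    · exact min_exp_neg_sub_div_one_mul_exp_neg_of_le hz (le_of_not_ge hy)
  simp_rw [hpiece]
  rw [integral_Ioi_ite_exp ht one_pos (by positivity)]
  field_simp
  ring

lemma integral_min_exp_above_truncatedBoundary {h t z w : ℝ} (hh : 0 ≤ h) (ht : 0 ≤ t)
    (hz : 0 < z) (hw : 0 ≤ w) :
    ∫ x in Ioi 0, ∫ y in Ioi (truncatedBoundary h t (z * w) x),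
        min (exp (-(y - t) / z)) 1 * exp (-(x + y)) =
      (1 - exp (-t) / (1 + z)) * (1 - exp (-h)) +
        exp (-h) * exp (-t) * z / ((1 + z) * (1 + w + z * w)) := by
  have hinner : ∀ x, ∫ y in Ioi (truncatedBoundary h t (z * w) x),
        min (exp (-(y - t) / z)) 1 * exp (-(x + y)) =
      if x ≤ h then (1 - exp (-t) / (1 + z)) * exp (-(1 * x))
      else exp (-h) * exp (-t) * z / (1 + z) * exp (-((1 + w + z * w) * (x - h))) := by
    intro x
    simp_rw [neg_add, exp_add, mul_left_comm _ (exp (-x)), integral_const_mul, truncatedBoundary]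
    split_ifs with hx
    · rw [integral_Ioi_zero_min_exp_neg_sub_div_one_mul_exp_neg ht hz, one_mul, mul_comm]
    · have hxh : 0 ≤ x - h := by linarith
      have hrate : exp (-((1 + w + z * w) * (x - h))) =
          exp (-(x - h)) * exp (-((1 + z⁻¹) * (t + z * w * (x - h) - t))) := by
        rw [← exp_add]; congr 1; field_simp; ring
      rw [integral_Ioi_min_exp_neg_sub_div_one_mul_exp_neg_of_le hz
          (le_add_of_nonneg_right (by positivity)), hrate,
        show exp (-x) = exp (-h) * exp (-(x - h)) by rw [← exp_add]; ring_nf]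
      field_simp
      ring
  simp_rw [hinner]
  rw [integral_Ioi_ite_exp hh one_pos (by positivity)]
  field_simp

theorem stmt19_general (θ ρ ξ γSB γUD W lam : ℝ)
    (hθ : 0 < θ) (hρ : 0 < ρ) (hξ : 0 < ξ) (hγSB : 0 < γSB) (hγUD : 0 < γUD)
    (hlam0 : 0 < lam) (hlam : lam < Real.exp (-θ / ξ))
    (z₁ z₂ : ℝ) (hz₁ : z₁ = θ * γSB / ρ) (hz₂ : z₂ = θ * γUD / ξ)
    (p₁ q₁ g₀ : ℝ → ℝ)
    (hp₁ : ∀ x : ℝ, p₁ x = Real.exp (-(θ * (γUD * x + 1)) / ξ))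
    (hq₁ : ∀ y : ℝ, q₁ y = min (Real.exp (-(ρ * y - θ) / (θ * γSB))) 1)
    (hg₀ : ∀ x : ℝ, g₀ x = z₁ * z₂ * x + θ / ρ + z₁ * (θ / ξ + Real.log lam))
    (hstar : ℝ) (hhstar : hstar = -(1 / z₂) * Real.log lam - 1 / γUD)
    (g₀t : ℝ → ℝ) (hg₀t : ∀ x : ℝ, g₀t x = if x ≤ hstar then 0 else g₀ x)
    (N₁ N₂ N₃ N₄ : ℝ)
    (hN₁ : N₁ = Real.exp (-θ / ξ) / (1 + z₂))
    (hN₂ : N₂ = (Real.exp (1 / γUD) / (1 + z₂)) *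
      (1 - (1 + z₂) * Real.exp (-θ / ρ) / (1 + z₂ + z₁ * z₂)))
    (hN₃ : N₃ = 1 + W * (1 - Real.exp (-θ / ρ) / (1 + z₁)))
    (hN₄ : N₄ = W * Real.exp (1 / γUD) *
      (1 - (1 + z₂) * Real.exp (-θ / ρ) / (1 + z₂ + z₁ * z₂))) :
    (∫ x in Set.Ioi (0 : ℝ), ∫ y in Set.Ioi (g₀t x), p₁ x * Real.exp (-(x + y))) /
        (1 + W * ∫ x in Set.Ioi (0 : ℝ), ∫ y in Set.Ioi (g₀t x),
          q₁ y * Real.exp (-(x + y))) =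
      (N₁ - N₂ * lam ^ (1 / z₂ + 1)) / (N₃ - N₄ * lam ^ (1 / z₂)) := by
  have hz₁0 : 0 < z₁ := by rw [hz₁]; positivity
  have hz₂0 : 0 < z₂ := by rw [hz₂]; positivity
  have hz₂h : z₂ * hstar = -log lam - θ / ξ := by rw [hhstar, hz₂]; field_simp
  have hh : 0 < hstar := by
    have hlog := log_lt_log hlam0 hlam
    rw [log_exp, neg_div] at hlog
    exact pos_of_mul_pos_right (by linarith : 0 < z₂ * hstar) hz₂0.le
  have hg : g₀t = truncatedBoundary hstar (θ / ρ) (z₁ * z₂) := funext fun x => by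
    rw [hg₀t, hg₀, truncatedBoundary]
    split_ifs
    · rfl
    · linear_combination z₁ * hz₂h
  have hp : ∀ x, p₁ x = exp (-θ / ξ - z₂ * x) := fun x => by
    rw [hp₁, hz₂]; congr 1; field_simp; ring
  have hq : ∀ y, q₁ y = min (exp (-(y - θ / ρ) / z₁)) 1 := fun y => by
    rw [hq₁, hz₁]; congr 2; field_simp
  have hexp_h : exp (-hstar) = lam ^ (1 / z₂) * exp (1 / γUD) := by
    rw [rpow_def_of_pos hlam0, ← exp_add, hhstar]; congr 1; ring
  have hexp_z₂h : exp (-θ / ξ) * exp (-(z₂ * hstar)) = lam := by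
    rw [← exp_add, hz₂h, show -θ / ξ + -(-log lam - θ / ξ) = log lam by ring, exp_log hlam0]
  simp_rw [hp, hq, hg]
  rw [integral_exp_above_truncatedBoundary hh.le hz₂0.le (by positivity),
    integral_min_exp_above_truncatedBoundary hh.le (by positivity) hz₁0 hz₂0.le,
    show exp (-((1 + z₂) * hstar)) = exp (-hstar) * exp (-(z₂ * hstar)) by
      rw [← exp_add]; ring_nf,
    hexp_h, rpow_add_one hlam0.ne', hN₁, hN₂, hN₃, hN₄]
  generalize lam ^ (1 / z₂) = P
  rw [← hexp_z₂h]
  field_simp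
  ring

/-- closed-form throughput, low-λ regime, single power level: for
`0 < λ < e^{−θ/ξ}` (so that `h* = −(1/z₂)·ln λ − 1/γ_UD > 0`), with the piecewise
boundary `g̃₀(x) = 0` for `x ≤ h*` and `g̃₀(x) = g₀(x)` for `x > h*`, the throughput
ratio of double integrals equals `(N₁ − N₂·λ^{1/z₂+1})/(N₃ − N₄·λ^{1/z₂})`. -/
theorem stmt19 (θ ρ ξ γSB γUD W lam : ℝ)
    (hθ : 0 < θ) (hρ : 0 < ρ) (hξ : 0 < ξ) (hγSB : 0 < γSB) (hγUD : 0 < γUD) (hW : 0 < W)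
    (hlam0 : 0 < lam) (hlam : lam < Real.exp (-θ / ξ))
    (z₁ z₂ : ℝ) (hz₁ : z₁ = θ * γSB / ρ) (hz₂ : z₂ = θ * γUD / ξ)
    (p₁ q₁ g₀ : ℝ → ℝ)
    (hp₁ : ∀ x : ℝ, p₁ x = Real.exp (-(θ * (γUD * x + 1)) / ξ))
    (hq₁ : ∀ y : ℝ, q₁ y = min (Real.exp (-(ρ * y - θ) / (θ * γSB))) 1)
    (hg₀ : ∀ x : ℝ, g₀ x = z₁ * z₂ * x + θ / ρ + z₁ * (θ / ξ + Real.log lam))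
    (hstar : ℝ) (hhstar : hstar = -(1 / z₂) * Real.log lam - 1 / γUD)
    (g₀t : ℝ → ℝ) (hg₀t : ∀ x : ℝ, g₀t x = if x ≤ hstar then 0 else g₀ x)
    (N₁ N₂ N₃ N₄ : ℝ)
    (hN₁ : N₁ = Real.exp (-θ / ξ) / (1 + z₂))
    (hN₂ : N₂ = (Real.exp (1 / γUD) / (1 + z₂)) *
      (1 - (1 + z₂) * Real.exp (-θ / ρ) / (1 + z₂ + z₁ * z₂)))
    (hN₃ : N₃ = 1 + W * (1 - Real.exp (-θ / ρ) / (1 + z₁)))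
    (hN₄ : N₄ = W * Real.exp (1 / γUD) *
      (1 - (1 + z₂) * Real.exp (-θ / ρ) / (1 + z₂ + z₁ * z₂))) :
    (∫ x in Set.Ioi (0 : ℝ), ∫ y in Set.Ioi (g₀t x), p₁ x * Real.exp (-(x + y))) /
        (1 + W * ∫ x in Set.Ioi (0 : ℝ), ∫ y in Set.Ioi (g₀t x),
          q₁ y * Real.exp (-(x + y))) =
      (N₁ - N₂ * lam ^ (1 / z₂ + 1)) / (N₃ - N₄ * lam ^ (1 / z₂)) :=
  stmt19_general θ ρ ξ γSB γUD W lam hθ hρ hξ hγSB hγUD hlam0 hlam z₁ z₂ hz₁ hz₂ p₁ q₁ g₀ hp₁ hq₁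
    hg₀ hstar hhstar g₀t hg₀t N₁ N₂ N₃ N₄ hN₁ hN₂ hN₃ hN₄
end
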